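/- arXiv:1505.01352 — 2 statements merged into one kernel-verified Lean document; each statement's English description precedes it below -/
import Mathlib

section
/- Let p be a prime and let G be a finite p-group whose center Z(G) has order p and coincides with the commutator subgroup [G,G] (in particular, every extraspecial p-group satisfies this). Then G is a generalized B-group: no proper central S-ring over G is primitive. -/
open scoped Pointwise

/-- The sum `X̲ = ∑_{x ∈ X} x` of a subset `X` of `G`, as an element of the
integral group ring `ℤG = MonoidAlgebra ℤ G`. -/
noncomputable def clsSum {G : Type*} [Group G] [DecidableEq G] (X : Finset G) : MonoidAlgebra ℤ G :=
  ∑ x ∈ X, MonoidAlgebra.single x 1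

/-- A Schur ring (S-ring) over a finite group `G`: a partition `S` of `G` into nonempty
classes such that `{1} ∈ S`, `S` is closed under taking inverses of classes, and the
`ℤ`-span of the class sums is closed under multiplication (hence a subring of `ℤG`). -/
structure SRing (G : Type*) [Group G] [Fintype G] [DecidableEq G] where
  S : Finset (Finset G)
  nonempty_mem : ∀ X ∈ S, X.Nonempty
  cover : ∀ g : G, ∃! X : Finset G, X ∈ S ∧ g ∈ X
  one_mem : ({1} : Finset G) ∈ S
  inv_mem : ∀ X ∈ S, X⁻¹ ∈ S
  mul_closed : ∀ ξ η : MonoidAlgebra ℤ G,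
    ξ ∈ Submodule.span ℤ (clsSum '' (S : Set (Finset G))) →
    η ∈ Submodule.span ℤ (clsSum '' (S : Set (Finset G))) →
    ξ * η ∈ Submodule.span ℤ (clsSum '' (S : Set (Finset G)))

namespace SRing

variable {G : Type*} [Group G] [Fintype G] [DecidableEq G]

/-- The underlying `ℤ`-module of the S-ring `A` inside `ℤG`. -/
noncomputable def span (A : SRing G) : Submodule ℤ (MonoidAlgebra ℤ G) :=
  Submodule.span ℤ (clsSum '' (A.S : Set (Finset G)))

/-- An S-ring is central if it is contained in the center of `ℤG`. -/
def IsCentral (A : SRing G) : Prop :=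
  ∀ ξ ∈ A.span, ∀ η : MonoidAlgebra ℤ G, ξ * η = η * ξ

/-- A set `T ⊆ G` is an `A`-set if it is a union of basic sets of `A`. -/
def IsASet (A : SRing G) (T : Set G) : Prop :=
  ∀ X ∈ A.S, (∃ x ∈ X, x ∈ T) → ∀ x ∈ X, x ∈ T

/-- An S-ring is primitive if its only `A`-subgroups are trivial. -/
def IsPrimitive (A : SRing G) : Prop :=
  ∀ H : Subgroup G, A.IsASet (H : Set G) → H = ⊥ ∨ H = ⊤

end SRing

/-- The conjugacy class of `g` in `G`, as a finset. -/
def conjClass {G : Type*} [Group G] [Fintype G] [DecidableEq G] (g : G) : Finset G :=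
  Finset.univ.filter (fun h => ∃ c : G, c * g * c⁻¹ = h)

/-- The partition of `G` into conjugacy classes; it is the basic-set partition of the
full center `Z(ℤG)` viewed as an S-ring. -/
def classPartition (G : Type*) [Group G] [Fintype G] [DecidableEq G] : Finset (Finset G) :=
  Finset.univ.image (fun g : G => conjClass g)

/-- The basic-set partition `{{e}, G \ {e}}` of the trivial S-ring over `G`. -/
def trivialPartition (G : Type*) [Group G] [Fintype G] [DecidableEq G] : Finset (Finset G) :=
  {({1} : Finset G), Finset.univ \ {1}}

/-- A central S-ring is proper if it lies strictly between `Z(ℤG)` and the trivial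
S-ring, i.e. its partition is neither the conjugacy class partition nor the trivial one. -/
def SRing.IsProper {G : Type*} [Group G] [Fintype G] [DecidableEq G] (A : SRing G) : Prop :=
  A.IsCentral ∧ A.S ≠ classPartition G ∧ A.S ≠ trivialPartition G

/-- `G` is a generalized B-group if no proper central S-ring over `G` is primitive. -/
def IsGeneralizedBGroup (G : Type*) [Group G] [Fintype G] [DecidableEq G] : Prop :=
  ∀ A : SRing G, A.IsProper → ¬ A.IsPrimitive

/-!
Write `Z = Z(G)`. Commutators being central, `c ↦ ⁅c, g⁆` is a homomorphism `G → Z`; for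
`g ∉ Z` it is nontrivial, hence onto since `|Z| = p`. So the conjugacy class of a noncentral
`g` is the coset `g Z`, and every basic set of a central S-ring contains, with each noncentral
element `x`, the whole coset `x Z`.

Let `A` be central, primitive and not trivial. The union of the basic sets inside `Z` is an
`A`-subgroup different from `G`, hence trivial: every basic set `X ≠ {1}` has a noncentral
element. The stabilizer of `X` under left translation is an `A`-subgroup (it is where the
coefficient of `X̲ X̲⁻¹` equals `|X|`); it would contain `Z` if `X ∩ Z = ∅`, so `X` meets `Z`.
Finally pick basic sets `X, Y ≠ {1}` with `X ≠ Y⁻¹`. A product `x y ∈ Z` with `x ∈ X`, `y ∈ Y`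
forces `x, y ∈ Z`, so the coefficients of `X̲ Y̲` sum to `|X ∩ Z| |Y ∩ Z|` over `Z`. But the
coefficient is constant on basic sets, and computed at noncentral elements it is at least
`|Y ∩ Z|` on `X ∩ Z` and at least `|X ∩ Z|` on `Y ∩ Z` (at least the sum on `X ∩ Y ∩ Z`), so the
same sum is at least twice that number, which is positive.
-/

open Finset Subgroup
open scoped commutatorElement

section CenterEqCommutator

variable {G : Type*} [Group G] [Finite G] {p : ℕ}

lemma isConj_mul_of_center_eq_commutator (hp : p.Prime) (hcenter : Nat.card (center G) = p)
    (hcomm : center G = commutator G) {g : G} (hg : g ∉ center G) {z : G}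
    (hz : z ∈ center G) : IsConj g (z * g) := by
  have hcen (a b : G) : ⁅a, b⁆ ∈ center G :=
    hcomm ▸ commutator_mem_commutator (mem_top a) (mem_top b)
  let φ : G →* G := MonoidHom.mk' (fun c => ⁅c, g⁆) fun a b => by
    calc ⁅a * b, g⁆ = a * ⁅b, g⁆ * (g * a⁻¹ * g⁻¹) := by simp only [commutatorElement_def]; group
      _ = ⁅b, g⁆ * a * (g * a⁻¹ * g⁻¹) := by rw [mem_center_iff.1 (hcen b g) a]
      _ = ⁅b, g⁆ * ⁅a, g⁆ := by simp only [commutatorElement_def]; group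
      _ = ⁅a, g⁆ * ⁅b, g⁆ := mem_center_iff.1 (hcen a g) _
  have hle : φ.range ≤ center G := by
    rintro _ ⟨c, rfl⟩
    exact hcen c g
  have hne : φ.range ≠ ⊥ := fun hbot => hg <| mem_center_iff.2 fun c => by
    have hc : ⁅c, g⁆ = 1 := (MonoidHom.range_eq_bot_iff.1 hbot ▸ rfl : φ c = 1)
    rwa [commutatorElement_eq_one_iff_mul_comm] at hc
  have hrange : φ.range = center G := by
    refine eq_of_le_of_card_ge hle (hcenter ▸ le_of_eq ?_)
    have hdvd : Nat.card φ.range ∣ p := hcenter ▸ card_dvd_of_le hle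
    exact ((hp.eq_one_or_self_of_dvd _ hdvd).resolve_left (mt card_eq_one.1 hne)).symm
  obtain ⟨c, hc⟩ := hrange ▸ hz
  refine isConj_iff.2 ⟨c, ?_⟩
  rw [← hc]
  change c * g * c⁻¹ = ⁅c, g⁆ * g
  simp only [commutatorElement_def]
  group

end CenterEqCommutator

section mulCount

variable {G : Type*} [Group G] [DecidableEq G]

def mulCount (X Y : Finset G) (w : G) : ℕ := #{p ∈ X ×ˢ Y | p.1 * p.2 = w}

lemma clsSum_coeff (X : Finset G) (g : G) : (clsSum X).coeff g = if g ∈ X then 1 else 0 := by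
  simp only [clsSum, MonoidAlgebra.coeff_sum, sum_apply', MonoidAlgebra.coeff_single,
    Finsupp.single_apply, sum_ite_eq']

lemma clsSum_mul_clsSum_coeff (X Y : Finset G) (w : G) :
    (clsSum X * clsSum Y).coeff w = mulCount X Y w := by
  simp only [clsSum, sum_mul_sum, MonoidAlgebra.single_mul_single, one_mul,
    MonoidAlgebra.coeff_sum, sum_apply', MonoidAlgebra.coeff_single, Finsupp.single_apply,
    mulCount, card_filter, ← sum_product']
  push_cast
  rfl

lemma mulCount_eq_card_filter (X Y : Finset G) (w : G) :
    mulCount X Y w = #{x ∈ X | x⁻¹ * w ∈ Y} := by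
  refine card_nbij' Prod.fst (fun x => (x, x⁻¹ * w)) ?_ ?_ ?_ ?_
  · rintro ⟨x, y⟩ hp
    simp only [coe_filter, mem_product, Set.mem_ofPred_eq] at hp ⊢
    obtain ⟨⟨hx, hy⟩, rfl⟩ := hp
    simpa [hx] using hy
  · intro x hx
    simp_all
  · rintro ⟨x, y⟩ hp
    simp only [coe_filter, mem_product, Set.mem_ofPred_eq] at hp
    obtain ⟨-, rfl⟩ := hp
    simp
  · intro x _
    rfl

lemma one_le_mulCount {X Y : Finset G} {x y : G} (hx : x ∈ X) (hy : y ∈ Y) :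
    1 ≤ mulCount X Y (x * y) :=
  one_le_card.2 ⟨(x, y), by simp [hx, hy]⟩

lemma exists_mul_eq_of_mulCount_pos {X Y : Finset G} {w : G} (h : 0 < mulCount X Y w) :
    ∃ x ∈ X, ∃ y ∈ Y, x * y = w := by
  obtain ⟨⟨x, y⟩, hp⟩ := card_pos.1 h
  simp only [mem_filter, mem_product] at hp
  exact ⟨x, hp.1.1, y, hp.1.2, hp.2⟩

lemma mem_stabilizer_iff_mulCount_eq {X : Finset G} {h : G} :
    h ∈ MulAction.stabilizer G X ↔ mulCount X X⁻¹ h = #X := by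
  have hfilter : {x ∈ X | x⁻¹ * h ∈ X⁻¹} = {x ∈ X | x ∈ h • X} := by
    refine filter_congr fun x _ => ?_
    rw [mem_inv', mul_inv_rev, inv_inv, ← inv_smul_mem_iff, smul_eq_mul]
  rw [MulAction.mem_stabilizer_iff, mulCount_eq_card_filter, hfilter, card_filter_eq_iff]
  exact ⟨fun hX x hx => hX.symm ▸ hx,
    fun hX => eq_of_superset_of_card_ge hX (card_smul_finset h X).le⟩

end mulCount

namespace SRing

variable {G : Type*} [Group G] [Fintype G] [DecidableEq G] (A : SRing G)

lemma eq_of_mem_of_mem {X Y : Finset G} (hX : X ∈ A.S) (hY : Y ∈ A.S) {x : G}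
    (hxX : x ∈ X) (hxY : x ∈ Y) : X = Y :=
  (A.cover x).unique ⟨hX, hxX⟩ ⟨hY, hxY⟩

lemma mem_iff_mem_of_mem {X W : Finset G} (hX : X ∈ A.S) (hW : W ∈ A.S) {w w' : G}
    (hw : w ∈ W) (hw' : w' ∈ W) : w ∈ X ↔ w' ∈ X :=
  ⟨fun h => A.eq_of_mem_of_mem hW hX hw h ▸ hw', fun h => A.eq_of_mem_of_mem hW hX hw' h ▸ hw⟩

lemma one_notMem {X : Finset G} (hX : X ∈ A.S) (hX1 : X ≠ {1}) : (1 : G) ∉ X :=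
  fun h => hX1 (A.eq_of_mem_of_mem hX A.one_mem h (mem_singleton_self 1))

lemma coeff_eq_of_mem_span {ξ : MonoidAlgebra ℤ G} (hξ : ξ ∈ A.span) {W : Finset G}
    (hW : W ∈ A.S) {w w' : G} (hw : w ∈ W) (hw' : w' ∈ W) : ξ.coeff w = ξ.coeff w' := by
  induction hξ using Submodule.span_induction with
  | mem ζ hζ =>
    obtain ⟨X, hX, rfl⟩ := hζ
    simp only [clsSum_coeff, A.mem_iff_mem_of_mem hX hW hw hw']
  | zero => rfl
  | add ξ η _ _ hξ hη => simp only [MonoidAlgebra.coeff_add, Finsupp.add_apply, hξ, hη]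
  | smul n ξ _ hξ => simp only [MonoidAlgebra.coeff_smul, Finsupp.smul_apply, hξ]

lemma mulCount_eq_of_mem {X Y W : Finset G} (hX : X ∈ A.S) (hY : Y ∈ A.S) (hW : W ∈ A.S)
    {w w' : G} (hw : w ∈ W) (hw' : w' ∈ W) : mulCount X Y w = mulCount X Y w' := by
  have hspan : clsSum X * clsSum Y ∈ A.span :=
    A.mul_closed _ _ (Submodule.subset_span ⟨X, hX, rfl⟩) (Submodule.subset_span ⟨Y, hY, rfl⟩)
  have := A.coeff_eq_of_mem_span hspan hW hw hw'
  rwa [clsSum_mul_clsSum_coeff, clsSum_mul_clsSum_coeff, Nat.cast_inj] at this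

lemma conj_mem_of_isCentral (hA : A.IsCentral) {X : Finset G} (hX : X ∈ A.S) {x : G}
    (hx : x ∈ X) (c : G) : c * x * c⁻¹ ∈ X := by
  have hcomm := congrArg (fun ξ : MonoidAlgebra ℤ G => ξ.coeff (c * x))
    (hA _ (Submodule.subset_span ⟨X, hX, rfl⟩) (MonoidAlgebra.single c 1))
  simpa [clsSum_coeff, hx] using hcomm

/-- The union of the basic sets contained in `H`. -/
def innerSubgroup (H : Subgroup G) : Subgroup G where
  carrier := {g | ∀ X ∈ A.S, g ∈ X → ∀ x ∈ X, x ∈ H}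
  one_mem' X hX h1 x hx := by
    rw [A.eq_of_mem_of_mem hX A.one_mem h1 (mem_singleton_self 1), mem_singleton] at hx
    exact hx ▸ H.one_mem
  mul_mem' {a b} ha hb W hW hab w hw := by
    obtain ⟨Xa, ⟨hXa, haXa⟩, -⟩ := A.cover a
    obtain ⟨Xb, ⟨hXb, hbXb⟩, -⟩ := A.cover b
    have hpos : 0 < mulCount Xa Xb w :=
      A.mulCount_eq_of_mem hXa hXb hW hab hw ▸ one_le_mulCount haXa hbXb
    obtain ⟨u, hu, v, hv, rfl⟩ := exists_mul_eq_of_mulCount_pos hpos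
    exact H.mul_mem (ha Xa hXa haXa u hu) (hb Xb hXb hbXb v hv)
  inv_mem' {g} hg W hW hgW w hw :=
    inv_inv w ▸ H.inv_mem (hg W⁻¹ (A.inv_mem W hW) (by simpa using hgW) w⁻¹ (inv_mem_inv hw))

lemma innerSubgroup_le (H : Subgroup G) : A.innerSubgroup H ≤ H := fun g hg => by
  obtain ⟨X, ⟨hX, hgX⟩, -⟩ := A.cover g
  exact hg X hX hgX g hgX

lemma isASet_innerSubgroup (H : Subgroup G) : A.IsASet (A.innerSubgroup H) := by
  rintro X hX ⟨x, hxX, hx⟩ y hyX W hW hyW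
  intro z hz
  exact hx X hX hxX z (A.eq_of_mem_of_mem hW hX hyW hyX ▸ hz)

lemma isASet_stabilizer {X : Finset G} (hX : X ∈ A.S) :
    A.IsASet (MulAction.stabilizer G X) := by
  rintro W hW ⟨w, hwW, hw⟩ w' hw'W
  simp only [SetLike.mem_coe, mem_stabilizer_iff_mulCount_eq] at hw ⊢
  rwa [A.mulCount_eq_of_mem hX (A.inv_mem X hX) hW hw'W hwW]

lemma exists_notMem_of_isPrimitive (hA : A.IsPrimitive) {H : Subgroup G} (hH : H ≠ ⊤)
    {X : Finset G} (hX : X ∈ A.S) (hX1 : X ≠ {1}) : ∃ x ∈ X, x ∉ H := by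
  by_contra! hXH
  have hbot : A.innerSubgroup H = ⊥ :=
    (hA _ (A.isASet_innerSubgroup H)).resolve_right
      fun htop => hH (top_le_iff.1 (htop ▸ A.innerSubgroup_le H))
  have hX_one : ∀ x ∈ X, x = 1 := fun x hx => by
    have hx' : x ∈ A.innerSubgroup H := fun W hW hxW =>
      A.eq_of_mem_of_mem hX hW hx hxW ▸ hXH
    rwa [hbot, mem_bot] at hx'
  obtain ⟨x, hx⟩ := A.nonempty_mem X hX
  exact hX1 (eq_singleton_iff_unique_mem.2 ⟨hX_one x hx ▸ hx, hX_one⟩)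

lemma stabilizer_eq_bot_of_isPrimitive (hA : A.IsPrimitive) {X : Finset G} (hX : X ∈ A.S)
    (h1 : (1 : G) ∉ X) : MulAction.stabilizer G X = ⊥ := by
  refine (hA _ (A.isASet_stabilizer hX)).resolve_right fun htop => ?_
  obtain ⟨x, hx⟩ := A.nonempty_mem X hX
  have hstab : x⁻¹ • X = X := MulAction.mem_stabilizer_iff.1 (htop ▸ mem_top x⁻¹)
  exact h1 (hstab ▸ (by simpa using smul_mem_smul_finset (a := x⁻¹) hx))

lemma exists_ne_inv_of_ne_trivialPartition [Nontrivial G] (h : A.S ≠ trivialPartition G) :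
    ∃ X ∈ A.S, ∃ Y ∈ A.S, X ≠ {1} ∧ Y ≠ {1} ∧ X ≠ Y⁻¹ := by
  by_contra! hinv
  have hunique : ∀ X ∈ A.S, ∀ Y ∈ A.S, X ≠ {1} → Y ≠ {1} → X = Y := fun X hX Y hY hX1 hY1 =>
    (hinv X hX Y hY hX1 hY1).trans (hinv Y hY Y hY hY1 hY1).symm
  obtain ⟨g, hg⟩ := exists_ne (1 : G)
  obtain ⟨X₀, ⟨hX₀, hgX₀⟩, -⟩ := A.cover g
  have ne_one_of_mem {X : Finset G} {x : G} (hx : x ∈ X) (hx1 : x ≠ 1) : X ≠ {1} := by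
    rintro rfl
    exact hx1 (mem_singleton.1 hx)
  have hX₀1 := ne_one_of_mem hgX₀ hg
  have hX₀eq : X₀ = univ \ {1} := by
    ext x
    refine ⟨fun hx => ?_, fun hx => ?_⟩
    · simpa using fun (h1 : x = 1) => A.one_notMem hX₀ hX₀1 (h1 ▸ hx)
    · obtain ⟨X, ⟨hX, hxX⟩, -⟩ := A.cover x
      have hx1 : x ≠ 1 := by simpa using hx
      exact hunique X hX X₀ hX₀ (ne_one_of_mem hxX hx1) hX₀1 ▸ hxX
  refine h (ext fun W => ?_)
  simp only [trivialPartition, mem_insert, mem_singleton, ← hX₀eq]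
  refine ⟨fun hW => or_iff_not_imp_left.2 fun hW1 => hunique W hW X₀ hX₀ hW1 hX₀1, ?_⟩
  rintro (rfl | rfl)
  exacts [A.one_mem, hX₀]

end SRing

section CenterStable

variable {G : Type*} [Group G] [Fintype G] [DecidableEq G]

def IsCenterStable (X : Finset G) : Prop :=
  ∀ z ∈ center G, ∀ x ∈ X, x ∉ center G → z * x ∈ X

variable {X Y : Finset G}

lemma mem_center_of_mul_mem_center (hY : IsCenterStable Y) (hXY : Disjoint X Y⁻¹) {x y : G}
    (hx : x ∈ X) (hy : y ∈ Y) (hxy : x * y ∈ center G) : x ∈ center G := by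
  by_contra hxZ
  have hyZ : y ∉ center G := fun hyZ => hxZ (by simpa using mul_mem hxy (inv_mem hyZ))
  have hxinv : (x * y)⁻¹ * y = x⁻¹ := by rw [← mem_center_iff.1 (inv_mem hxy) y]; group
  have hxY : x ∈ Y⁻¹ := mem_inv'.2 (hxinv ▸ hY _ (inv_mem hxy) y hy hyZ)
  exact disjoint_left.1 hXY hx hxY

lemma sum_mulCount_center (hY : IsCenterStable Y) (hXY : Disjoint X Y⁻¹) :
    ∑ w with w ∈ center G, mulCount X Y w =
      #{x ∈ X | x ∈ center G} * #{y ∈ Y | y ∈ center G} := by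
  have hpairs : {p ∈ X ×ˢ Y | p.1 * p.2 ∈ center G} =
      {x ∈ X | x ∈ center G} ×ˢ {y ∈ Y | y ∈ center G} := by
    ext ⟨x, y⟩
    simp only [mem_filter, mem_product]
    refine ⟨fun ⟨⟨hx, hy⟩, hxy⟩ => ?_, fun ⟨⟨hx, hxZ⟩, hy, hyZ⟩ => ⟨⟨hx, hy⟩, mul_mem hxZ hyZ⟩⟩
    have hxZ := mem_center_of_mul_mem_center hY hXY hx hy hxy
    exact ⟨⟨hx, hxZ⟩, hy, by simpa using mul_mem (inv_mem hxZ) hxy⟩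
  rw [← card_product, ← hpairs, card_eq_sum_card_fiberwise (f := fun p => p.1 * p.2)
    (t := {w | w ∈ center G}) (fun p hp => by simpa using (mem_filter.1 hp).2)]
  refine sum_congr rfl fun w hw => ?_
  rw [filter_filter, mulCount]
  refine congrArg card (filter_congr fun p _ => ?_)
  exact ⟨fun h => ⟨h ▸ (mem_filter.1 hw).2, h⟩, And.right⟩

lemma card_center_le_mulCount_of_mem_left (hX : IsCenterStable X) {n : G} (hnX : n ∈ X)
    (hn : n ∉ center G) :
    #{y ∈ Y | y ∈ center G} ≤ #{p ∈ X ×ˢ Y | p.1 * p.2 = n ∧ p.2 ∈ center G} := by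
  refine card_le_card_of_injOn (fun y => (n * y⁻¹, y)) (fun y hy => ?_)
    (fun y _ y' _ h => (Prod.ext_iff.1 h).2)
  obtain ⟨hyY, hyZ⟩ := mem_filter.1 hy
  have hnX' : n * y⁻¹ ∈ X := by
    rw [mem_center_iff.1 (inv_mem hyZ) n]
    exact hX _ (inv_mem hyZ) n hnX hn
  simp [hnX', hyY, hyZ]

lemma card_center_le_mulCount_of_mem_right (hY : IsCenterStable Y) {n : G} (hnY : n ∈ Y)
    (hn : n ∉ center G) :
    #{x ∈ X | x ∈ center G} ≤ #{p ∈ X ×ˢ Y | p.1 * p.2 = n ∧ p.1 ∈ center G} := by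
  refine card_le_card_of_injOn (fun x => (x, x⁻¹ * n)) (fun x hx => ?_)
    (fun x _ x' _ h => (Prod.ext_iff.1 h).1)
  obtain ⟨hxX, hxZ⟩ := mem_filter.1 hx
  simp [hxX, hxZ, hY _ (inv_mem hxZ) n hnY hn]

lemma le_mulCount_of_notMem_center (hX : IsCenterStable X) (hY : IsCenterStable Y) {n : G}
    (hn : n ∉ center G) :
    (if n ∈ X then #{y ∈ Y | y ∈ center G} else 0) +
      (if n ∈ Y then #{x ∈ X | x ∈ center G} else 0) ≤ mulCount X Y n := by
  -- A factorisation of the noncentral `n` has at most one central factor.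
  have hsub : {p ∈ X ×ˢ Y | p.1 * p.2 = n ∧ p.1 ∈ center G} ⊆
      {p ∈ {p ∈ X ×ˢ Y | p.1 * p.2 = n} | p.2 ∉ center G} := by
    intro p hp
    simp only [mem_filter] at hp ⊢
    exact ⟨⟨hp.1, hp.2.1⟩, fun h2 => hn (hp.2.1 ▸ mul_mem hp.2.2 h2)⟩
  calc _ ≤ #{p ∈ X ×ˢ Y | p.1 * p.2 = n ∧ p.2 ∈ center G} +
        #{p ∈ X ×ˢ Y | p.1 * p.2 = n ∧ p.1 ∈ center G} := by
        gcongr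
        · split_ifs with h
          exacts [card_center_le_mulCount_of_mem_left hX h hn, Nat.zero_le _]
        · split_ifs with h
          exacts [card_center_le_mulCount_of_mem_right hY h hn, Nat.zero_le _]
    _ ≤ #{p ∈ {p ∈ X ×ˢ Y | p.1 * p.2 = n} | p.2 ∈ center G} +
        #{p ∈ {p ∈ X ×ˢ Y | p.1 * p.2 = n} | p.2 ∉ center G} := by
        rw [filter_filter]
        exact add_le_add_right (card_le_card hsub) _
    _ = mulCount X Y n := card_filter_add_card_filter_not _

end CenterStable

namespace SRing

variable {G : Type*} [Group G] [Fintype G] [DecidableEq G] (A : SRing G)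

lemma isCenterStable_of_isCentral (hA : A.IsCentral)
    (hconj : ∀ g ∉ center G, ∀ z ∈ center G, IsConj g (z * g)) {X : Finset G} (hX : X ∈ A.S) :
    IsCenterStable X := fun z hz x hx hxZ => by
  obtain ⟨c, hc⟩ := isConj_iff.1 (hconj x hxZ z hz)
  exact hc ▸ A.conj_mem_of_isCentral hA hX hx c

lemma filter_mem_center_nonempty_of_isPrimitive (hA : A.IsPrimitive) (hZ : center G ≠ ⊥)
    {X : Finset G} (hX : X ∈ A.S) (hX1 : X ≠ {1}) (hXs : IsCenterStable X) :
    ({x ∈ X | x ∈ center G} : Finset G).Nonempty := by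
  by_contra hempty
  simp only [not_nonempty_iff_eq_empty, filter_eq_empty_iff] at hempty
  have hle : center G ≤ MulAction.stabilizer G X := fun z hz => by
    have hsub : z • X ⊆ X := by
      intro y hy
      obtain ⟨x, hx, rfl⟩ := mem_smul_finset.1 hy
      exact hXs z hz x hx (hempty hx)
    exact MulAction.mem_stabilizer_iff.2 (eq_of_subset_of_card_le hsub (card_smul_finset z X).ge)
  exact hZ (le_bot_iff.1 (A.stabilizer_eq_bot_of_isPrimitive hA hX (A.one_notMem hX hX1) ▸ hle))

lemma card_center_mul_card_center_eq_zero (hstable : ∀ X ∈ A.S, IsCenterStable X)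
    (hnoncentral : ∀ X ∈ A.S, X ≠ {1} → ∃ x ∈ X, x ∉ center G)
    {X Y : Finset G} (hX : X ∈ A.S) (hY : Y ∈ A.S) (hX1 : X ≠ {1}) (hY1 : Y ≠ {1})
    (hXY : X ≠ Y⁻¹) : #{x ∈ X | x ∈ center G} * #{y ∈ Y | y ∈ center G} = 0 := by
  have hle (w : G) : (if w ∈ X then #{y ∈ Y | y ∈ center G} else 0) +
      (if w ∈ Y then #{x ∈ X | x ∈ center G} else 0) ≤ mulCount X Y w := by
    obtain ⟨W, ⟨hW, hwW⟩, -⟩ := A.cover w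
    by_cases hW1 : W = {1}
    · rw [hW1, mem_singleton] at hwW
      simp [hwW, A.one_notMem hX hX1, A.one_notMem hY hY1]
    obtain ⟨n, hnW, hn⟩ := hnoncentral W hW hW1
    simp only [A.mem_iff_mem_of_mem hX hW hwW hnW, A.mem_iff_mem_of_mem hY hW hwW hnW,
      A.mulCount_eq_of_mem hX hY hW hwW hnW]
    exact le_mulCount_of_notMem_center (hstable X hX) (hstable Y hY) hn
  have hdisj : Disjoint X Y⁻¹ := disjoint_left.2 fun x hxX hxY =>
    hXY (A.eq_of_mem_of_mem hX (A.inv_mem Y hY) hxX hxY)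
  have hsum_ite (T : Finset G) (c : ℕ) :
      ∑ w with w ∈ center G, (if w ∈ T then c else 0) = #{t ∈ T | t ∈ center G} * c := by
    rw [sum_ite_mem, sum_const, smul_eq_mul]
    congr 2
    ext
    simp [and_comm]
  have hcount := sum_le_sum fun w (_ : w ∈ ({w | w ∈ center G} : Finset G)) => hle w
  rw [sum_add_distrib, hsum_ite, hsum_ite, sum_mulCount_center (hstable Y hY) hdisj] at hcount
  lia

end SRing

theorem extraspecial_isGeneralizedBGroup_general {G : Type*} [Group G] [Fintype G] [DecidableEq G]
    (p : ℕ) (hp : p.Prime)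
    (hcenter : Nat.card (Subgroup.center G) = p)
    (hcomm : Subgroup.center G = commutator G) :
    IsGeneralizedBGroup G := by
  rintro A ⟨hcentral, -, hntriv⟩ hprim
  have hZbot : center G ≠ ⊥ := fun h => hp.one_lt.ne' (by rw [← hcenter, h, card_bot])
  have hZtop : center G ≠ ⊤ := fun h =>
    hZbot (hcomm.trans ((commutator_eq_bot_iff_center_eq_top G).2 h))
  have : Nontrivial G := by
    obtain ⟨z, hz⟩ := ne_bot_iff_exists_ne_one.1 hZbot
    exact nontrivial_of_ne _ _ (Subtype.coe_injective.ne hz)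
  have hstable : ∀ X ∈ A.S, IsCenterStable X := fun X hX =>
    A.isCenterStable_of_isCentral hcentral
      (fun _ hg _ hz => isConj_mul_of_center_eq_commutator hp hcenter hcomm hg hz) hX
  obtain ⟨X, hX, Y, hY, hX1, hY1, hXY⟩ := A.exists_ne_inv_of_ne_trivialPartition hntriv
  have hcount := A.card_center_mul_card_center_eq_zero hstable
    (fun W hW hW1 => A.exists_notMem_of_isPrimitive hprim hZtop hW hW1) hX hY hX1 hY1 hXY
  have hmeets (W : Finset G) (hW : W ∈ A.S) (hW1 : W ≠ {1}) : 0 < #{w ∈ W | w ∈ center G} :=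
    (A.filter_mem_center_nonempty_of_isPrimitive hprim hZbot hW hW1 (hstable W hW)).card_pos
  exact mul_ne_zero (hmeets X hX hX1).ne' (hmeets Y hY hY1).ne' hcount

/-- **Extraspecial-like `p`-groups are generalized B-groups** (cf. Corollary 1.5).
Let `p` be a prime and `G` a finite `p`-group whose center has order `p` and coincides
with the commutator subgroup (e.g. any extraspecial `p`-group). Then `G` is a
generalized B-group: no proper central S-ring over `G` is primitive. -/
theorem extraspecial_isGeneralizedBGroup {G : Type*} [Group G] [Fintype G] [DecidableEq G]
    (p : ℕ) (hp : p.Prime) (hpG : IsPGroup p G)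
    (hcenter : Nat.card (Subgroup.center G) = p)
    (hcomm : Subgroup.center G = commutator G) :
    IsGeneralizedBGroup G :=
  extraspecial_isGeneralizedBGroup_general p hp hcenter hcomm
end

section
/- Let 𝒜 be a central S-ring over a finite group G. Then 𝒜 is rational if and only if for every irreducible complex character χ of G and every basic set X ∈ 𝒮(𝒜), the character sum ∑_{x∈X} χ(x) is a rational number. -/
open scoped Pointwise

/-- A central S-ring is rational if every basic set is fixed by all power maps
`x ↦ x^m` with `m` coprime to `|G|`. -/
def SRing.IsRational {G : Type*} [Group G] [Fintype G] [DecidableEq G] (A : SRing G) : Prop :=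
  ∀ X ∈ A.S, ∀ m : ℤ, Int.gcd m (Fintype.card G) = 1 → X.image (fun x => x ^ m) = X

/-!
For a basic set `X` and an irreducible character `χ`, the sum `∑_{x ∈ X} χ(x^m)` is the image of
`∑_{x ∈ X} χ(x)` under the automorphism `ζ ↦ ζ^m` of `ℚ(ζ_{|G|})`, because every `ρ(x)` is
diagonalisable with `|G|`-th roots of unity as eigenvalues. Hence `∑_{x ∈ X} χ(x)` is rational iff
it equals `∑_{x ∈ X} χ(x^m)` for every `m` coprime to `|G|`, which holds when `X^{(m)} = X`.
Conversely, in a central S-ring every basic set is a union of conjugacy classes, so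
`X̲^{(m)} - X̲` is central in `ℂG`. By Schur it acts on each irreducible module as a scalar, which
is zero since its trace `∑ χ(x^m) - ∑ χ(x)` vanishes; as `ℂG` is semisimple, `X̲^{(m)} = X̲`.
-/

universe u

namespace MonoidAlgebra

variable {R G : Type*} [Semiring R]

theorem eq_of_sum_single_one_eq [Monoid G] [Nontrivial R] {X Y : Finset G}
    (h : ∑ x ∈ X, single x (1 : R) = ∑ y ∈ Y, single y 1) : X = Y := by
  classical
  ext g
  have := congrArg (fun a : R[G] => a.coeff g) h
  simp only [coeff_sum, coeff_single, Finsupp.finsetSum_apply, Finsupp.single_apply,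
    Finset.sum_ite_eq'] at this
  by_cases hX : g ∈ X <;> by_cases hY : g ∈ Y <;> simp_all

variable [Group G]

theorem sum_single_one_mem_center {X : Finset G} (hX : ∀ g, ∀ x ∈ X, g * x * g⁻¹ ∈ X) :
    ∑ x ∈ X, single x (1 : R) ∈ Set.center R[G] := by
  rw [Semigroup.mem_center_iff]
  intro b
  induction b using MonoidAlgebra.induction_linear with
  | zero => simp
  | add a b ha hb => rw [add_mul, mul_add, ha, hb]
  | single g r =>
    rw [Finset.mul_sum, Finset.sum_mul]
    refine Finset.sum_nbij' (fun x => g * x * g⁻¹) (fun x => g⁻¹ * x * g) (hX g)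
      (fun x hx => by simpa using hX g⁻¹ x hx) (fun x _ => by group) (fun x _ => by group)
      fun x _ => ?_
    simp [single_mul_single, mul_assoc]

theorem image_conj_eq_of_commute [DecidableEq G] [Nontrivial R] {X : Finset G} {g : G}
    (h : single g (1 : R) * ∑ x ∈ X, single x 1 = (∑ x ∈ X, single x 1) * single g 1) :
    X.image (fun x => g * x * g⁻¹) = X := by
  apply eq_of_sum_single_one_eq (R := R)
  rw [Finset.sum_image fun x _ y _ hxy => by simpa using hxy]
  calc ∑ x ∈ X, single (g * x * g⁻¹) (1 : R)
      = single g 1 * (∑ x ∈ X, single x 1) * single g⁻¹ 1 := by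
        simp [Finset.mul_sum, Finset.sum_mul, single_mul_single]
    _ = ∑ x ∈ X, single x 1 := by
        rw [h, mul_assoc, single_mul_single, mul_inv_cancel, one_mul, ← one_def, mul_one]

end MonoidAlgebra

namespace SRing

variable {G : Type*} [Group G] [Fintype G] [DecidableEq G]

theorem IsCentral.conj_mem {A : SRing G} (hA : A.IsCentral) {X : Finset G} (hX : X ∈ A.S)
    (g : G) {x : G} (hx : x ∈ X) : g * x * g⁻¹ ∈ X := by
  have h := hA (clsSum X) (Submodule.subset_span ⟨X, hX, rfl⟩) (MonoidAlgebra.single g 1)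
  rw [← MonoidAlgebra.image_conj_eq_of_commute (R := ℤ) h.symm]
  exact Finset.mem_image_of_mem _ hx

end SRing

theorem IsSimpleModule.smul_eq_zero_of_trace_eq_zero {k A M : Type*} [Field k] [IsAlgClosed k]
    [CharZero k] [Ring A] [Algebra k A] [AddCommGroup M] [Module k M] [Module A M]
    [IsScalarTower k A M] [FiniteDimensional k M] [IsSimpleModule A M] {a : A}
    (ha : a ∈ Set.center A)
    (htr : LinearMap.trace k M (Algebra.lsmul k k M a) = 0) (m : M) : a • m = 0 := by
  let f : M →ₗ[A] M :=
    { toFun := (a • ·)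
      map_add' := smul_add a
      map_smul' := fun r m => by
        simp only [smul_smul, Semigroup.mem_center_iff.1 ha r, RingHom.id_apply] }
  obtain ⟨c, hc⟩ :=
    (IsSimpleModule.algebraMap_end_bijective_of_isAlgClosed k (A := A) (V := M)).2 f
  have hf : Algebra.lsmul k k M a = c • LinearMap.id := by
    ext m
    exact (LinearMap.congr_fun hc m).symm
  have : Nontrivial M := IsSimpleModule.nontrivial A M
  have hc0 : c = 0 := by
    rw [hf, map_smul, LinearMap.trace_id, smul_eq_mul, mul_eq_zero] at htr
    exact htr.resolve_right (Nat.cast_ne_zero.2 Module.finrank_pos.ne')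
  change f m = 0
  rw [← hc, hc0, map_zero, LinearMap.zero_apply]

namespace Representation

variable {k G M : Type*} [Field k] [Monoid G] [AddCommGroup M] [Module k M]
  [Module (MonoidAlgebra k G) M] [IsScalarTower k (MonoidAlgebra k G) M]

theorem asAlgebraHom_ofModule' :
    (ofModule' (k := k) (G := G) M).asAlgebraHom = Algebra.lsmul k k M :=
  (MonoidAlgebra.lift k (M →ₗ[k] M) G).apply_symm_apply _

theorem isIrreducible_ofModule' [IsSimpleModule (MonoidAlgebra k G) M] :
    (ofModule' (k := k) (G := G) M).IsIrreducible := by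
  let e : (ofModule' (k := k) (G := G) M).asModule ≃ₗ[MonoidAlgebra k G] M :=
    { (ofModule' M).asModuleEquiv with
      map_smul' := fun r x => by
        simp [asModuleEquiv_map_smul, asAlgebraHom_ofModule'] }
  exact (irreducible_iff_isSimpleModule_asModule _).2 (IsSimpleModule.congr e)

end Representation

open CategoryTheory in
theorem FDRep.simple_of_isIrreducible {k G V : Type u} [Field k] [Monoid G] [AddCommGroup V]
    [Module k V] [FiniteDimensional k V] (ρ : Representation k G V) [ρ.IsIrreducible] :
    Simple (FDRep.of ρ) := by
  let F := forget₂ (FDRep k G) (Rep k G) ⋙ Rep.equivalenceModuleMonoidAlgebra.functor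
  have : IsSimpleModule (MonoidAlgebra k G) ρ.asModule :=
    (Representation.irreducible_iff_isSimpleModule_asModule ρ).mp ‹_›
  have : Simple (ModuleCat.of (MonoidAlgebra k G) ρ.asModule) := inferInstance
  have : Simple (F.obj (FDRep.of ρ)) := this
  exact Functor.simple_of_simple_obj F _

open CategoryTheory in
theorem MonoidAlgebra.eq_zero_of_forall_trace_eq_zero {k G : Type u} [Field k] [IsAlgClosed k]
    [CharZero k] [Group G] [Finite G] {a : MonoidAlgebra k G}
    (ha : a ∈ Set.center (MonoidAlgebra k G))
    (h : ∀ V : FDRep k G, Simple V → LinearMap.trace k V (Representation.asAlgebraHom V.ρ a) = 0) :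
    a = 0 := by
  have : NeZero (Nat.card G : k) := ⟨Nat.cast_ne_zero.2 Nat.card_pos.ne'⟩
  have hkill : ∀ W : Submodule (MonoidAlgebra k G) (MonoidAlgebra k G),
      IsSimpleModule (MonoidAlgebra k G) W →
        W ≤ LinearMap.ker (LinearMap.toSpanSingleton _ _ a) := by
    intro W hW w hw
    have := Representation.isIrreducible_ofModule' (k := k) (G := G) (M := W)
    have htr := h _ (FDRep.simple_of_isIrreducible (Representation.ofModule' W))
    rw [FDRep.of_ρ', Representation.asAlgebraHom_ofModule'] at htr
    have := congrArg Subtype.val (IsSimpleModule.smul_eq_zero_of_trace_eq_zero ha htr ⟨w, hw⟩)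
    simpa [Semigroup.mem_center_iff.1 ha w] using this
  have := sSup_le hkill <|
    (IsSemisimpleModule.sSup_simples_eq_top (MonoidAlgebra k G) (MonoidAlgebra k G)).ge
      (Submodule.mem_top (x := 1))
  simpa using this

theorem Finset.eq_of_forall_sum_character_eq {k G : Type u} [Field k] [IsAlgClosed k] [CharZero k]
    [Group G] [Finite G] {X Y : Finset G} (hX : ∀ g, ∀ x ∈ X, g * x * g⁻¹ ∈ X)
    (hY : ∀ g, ∀ y ∈ Y, g * y * g⁻¹ ∈ Y)
    (h : ∀ V : FDRep k G, CategoryTheory.Simple V →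
      ∑ x ∈ X, V.character x = ∑ y ∈ Y, V.character y) :
    X = Y := by
  refine MonoidAlgebra.eq_of_sum_single_one_eq (R := k) (sub_eq_zero.1 ?_)
  refine MonoidAlgebra.eq_zero_of_forall_trace_eq_zero
    ((Subring.center _).sub_mem (MonoidAlgebra.sum_single_one_mem_center hX)
      (MonoidAlgebra.sum_single_one_mem_center hY)) fun V hV => ?_
  simpa [Representation.asAlgebraHom_single, FDRep.character, sub_eq_zero] using h V hV

namespace Module.End

variable {K V : Type*} [Field K] [AddCommGroup V] [Module K V]

theorem HasEigenvalue.pow_eq_one {f : End K V} {μ : K} (hμ : f.HasEigenvalue μ) {n : ℕ}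
    (hf : f ^ n = 1) : μ ^ n = 1 := by
  obtain ⟨v, hv⟩ := hμ.exists_hasEigenvector
  refine smul_left_injective K hv.2 ?_
  simpa [hf] using (hv.pow_apply n).symm

theorem exists_multiset_trace_pow_eq [IsAlgClosed K] [FiniteDimensional K V] {f : End K V}
    {n : ℕ} (hn : (n : K) ≠ 0) (hf : f ^ n = 1) :
    ∃ M : Multiset K, (∀ μ ∈ M, μ ^ n = 1) ∧
      ∀ k : ℕ, LinearMap.trace K V (f ^ k) = (M.map (· ^ k)).sum := by
  classical
  have hss : f.IsSemisimple := isSemisimple_of_squarefree_aeval_eq_zero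
    (Polynomial.X_pow_sub_one_separable_iff.2 hn).squarefree (by simp [hf])
  have hint : DirectSum.IsInternal f.eigenspace :=
    DirectSum.isInternal_submodule_of_iSupIndep_of_iSup_eq_top f.eigenspaces_iSupIndep
      hss.iSup_eigenspace_eq_top
  have hfin : {μ | f.eigenspace μ ≠ ⊥}.Finite := f.finite_hasEigenvalue
  refine ⟨hfin.toFinset.val.bind fun μ => .replicate (finrank K (f.eigenspace μ)) μ,
    fun μ hμ => ?_, fun k => ?_⟩
  · obtain ⟨μ', hμ', hμμ'⟩ := Multiset.mem_bind.1 hμ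
    rw [Multiset.eq_of_mem_replicate hμμ']
    exact HasEigenvalue.pow_eq_one (hfin.mem_toFinset.1 hμ') hf
  · have hmaps (μ : K) : Set.MapsTo (f ^ k) (f.eigenspace μ) (f.eigenspace μ) :=
      mapsTo_genEigenspace_of_comm (Commute.self_pow f k) μ 1
    rw [LinearMap.trace_eq_sum_trace_restrict' hint hfin hmaps, Multiset.map_bind,
      Multiset.sum_bind, Finset.sum_eq_multiset_sum]
    refine congrArg Multiset.sum (Multiset.map_congr rfl fun μ _ => ?_)
    have hpow : ∀ v ∈ f.eigenspace μ, (f ^ k) v = μ ^ k • v := by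
      intro v hv
      rcases eq_or_ne v 0 with rfl | hv0
      · simp
      · exact HasEigenvector.pow_apply ⟨hv, hv0⟩ k
    have hres : (f ^ k).restrict (hmaps μ) = μ ^ k • LinearMap.id := by
      ext ⟨v, hv⟩
      exact hpow v hv
    rw [hres, map_smul, LinearMap.trace_id, Multiset.map_replicate, Multiset.sum_replicate,
      smul_eq_mul, nsmul_eq_mul, mul_comm]

end Module.End

theorem IsPrimitiveRoot.algEquiv_apply_eq_pow {R S : Type*} [CommRing R] [CommRing S] [IsDomain S]
    [Algebra R S] {ζ : S} {n : ℕ} [NeZero n] (hζ : IsPrimitiveRoot ζ n) (σ : S ≃ₐ[R] S) {μ : S}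
    (hμ : μ ^ n = 1) : σ μ = μ ^ (hζ.autToPow R σ : ZMod n).val := by
  obtain ⟨i, -, rfl⟩ := hζ.eq_pow_of_pow_eq_one hμ
  rw [map_pow, ← hζ.autToPow_spec R σ, ← pow_mul, ← pow_mul, mul_comm]

theorem IsCyclotomicExtension.Rat.multiset_sum_mem_bot_iff {n : ℕ} [NeZero n] {K : Type*}
    [Field K] [Algebra ℚ K] [IsCyclotomicExtension {n} ℚ K] {M : Multiset K}
    (hM : ∀ μ ∈ M, μ ^ n = 1) :
    M.sum ∈ (⊥ : IntermediateField ℚ K) ↔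
      ∀ m : ℕ, m.Coprime n → (M.map (· ^ m)).sum = M.sum := by
  have := IsCyclotomicExtension.finiteDimensional {n} ℚ K
  have := IsCyclotomicExtension.isGalois {n} ℚ K
  have hζ := zeta_spec n ℚ K
  have hσ (σ : K ≃ₐ[ℚ] K) : σ M.sum = (M.map (· ^ (hζ.autToPow ℚ σ : ZMod n).val)).sum := by
    rw [map_multiset_sum]
    exact congrArg _ (Multiset.map_congr rfl fun μ hμ => hζ.algEquiv_apply_eq_pow σ (hM μ hμ))
  rw [IsGalois.mem_bot_iff_fixed]
  refine ⟨fun hfix m hm => ?_, fun h σ => by rw [hσ σ]; exact h _ (ZMod.val_coe_unit_coprime _)⟩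
  let σ := (autEquivPow K (Polynomial.cyclotomic.irreducible_rat (NeZero.pos n))).symm
    (ZMod.unitOfCoprime m hm)
  have hau : (hζ.autToPow ℚ σ : ZMod n).val = m % n := by
    have : hζ.autToPow ℚ σ = ZMod.unitOfCoprime m hm :=
      (autEquivPow K (Polynomial.cyclotomic.irreducible_rat (NeZero.pos n))).apply_symm_apply _
    rw [this, ZMod.coe_unitOfCoprime, ZMod.val_natCast]
  rw [← hfix σ, hσ σ, hau]
  exact congrArg _ (Multiset.map_congr rfl fun μ hμ => pow_eq_pow_mod m (hM μ hμ))

theorem Multiset.sum_mem_range_ratCast_iff {F : Type*} [Field F] [CharZero F] [IsAlgClosed F]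
    {n : ℕ} [NeZero n] {M : Multiset F} (hM : ∀ μ ∈ M, μ ^ n = 1) :
    M.sum ∈ Set.range ((↑) : ℚ → F) ↔ ∀ m : ℕ, m.Coprime n → (M.map (· ^ m)).sum = M.sum := by
  have : IsCyclotomicExtension {n} ℚ (CyclotomicField n ℚ) :=
    CyclotomicField.isCyclotomicExtension n ℚ
  let φ : CyclotomicField n ℚ →ₐ[ℚ] F := IsAlgClosed.lift
  have hφ : Function.Injective φ := φ.toRingHom.injective
  have hζ := (IsCyclotomicExtension.zeta_spec n ℚ (CyclotomicField n ℚ)).map_of_injective hφ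
  have hrange : ∀ μ ∈ M, μ ∈ Set.range φ := fun μ hμ => by
    obtain ⟨i, -, rfl⟩ := hζ.eq_pow_of_pow_eq_one (hM μ hμ)
    exact ⟨_, map_pow φ _ i⟩
  obtain ⟨M, rfl⟩ : ∃ M' : Multiset (CyclotomicField n ℚ), M'.map φ = M :=
    ⟨M.map (Function.invFun φ), by
      rw [Multiset.map_map]
      exact (Multiset.map_congr rfl fun μ hμ => Function.invFun_eq (hrange μ hμ)).trans M.map_id⟩
  have hM' : ∀ μ ∈ M, μ ^ n = 1 := fun μ hμ =>
    hφ (by simpa using hM (φ μ) (Multiset.mem_map_of_mem φ hμ))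
  have hsum (m : ℕ) : ((M.map φ).map (· ^ m)).sum = φ (M.map (· ^ m)).sum := by
    simp [map_multiset_sum, Multiset.map_map]
  have hcast : ((↑) : ℚ → F) = φ ∘ algebraMap ℚ (CyclotomicField n ℚ) :=
    funext fun q => by rw [Function.comp_apply, φ.commutes, eq_ratCast]
  simp_rw [hsum, ← map_multiset_sum, hφ.eq_iff, hcast, Set.range_comp, hφ.mem_set_image]
  rw [← IsCyclotomicExtension.Rat.multiset_sum_mem_bot_iff hM', IntermediateField.mem_bot]

namespace FDRep

variable {k G : Type u} [Field k] [IsAlgClosed k] [CharZero k] [Group G] [Fintype G]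

theorem exists_multiset_sum_character_pow_eq (V : FDRep k G) (X : Finset G) :
    ∃ M : Multiset k, (∀ μ ∈ M, μ ^ Fintype.card G = 1) ∧
      ∀ j : ℕ, ∑ x ∈ X, V.character (x ^ j) = (M.map (· ^ j)).sum := by
  have hcard : (Fintype.card G : k) ≠ 0 := Nat.cast_ne_zero.2 Fintype.card_ne_zero
  choose M hM htr using fun x : G => Module.End.exists_multiset_trace_pow_eq hcard
    (by rw [← map_pow, pow_card_eq_one, map_one] : V.ρ x ^ Fintype.card G = 1)
  refine ⟨X.val.bind M, fun μ hμ => ?_, fun j => ?_⟩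
  · obtain ⟨x, -, hμx⟩ := Multiset.mem_bind.1 hμ
    exact hM x μ hμx
  · rw [Multiset.map_bind, Multiset.sum_bind, Finset.sum_eq_multiset_sum]
    exact congrArg Multiset.sum (Multiset.map_congr rfl fun x _ => by
      rw [← htr, character, map_pow])

theorem sum_character_mem_range_ratCast_iff (V : FDRep k G) (X : Finset G) :
    ∑ x ∈ X, V.character x ∈ Set.range ((↑) : ℚ → k) ↔
      ∀ m : ℕ, m.Coprime (Fintype.card G) →
        ∑ x ∈ X, V.character (x ^ m) = ∑ x ∈ X, V.character x := by
  obtain ⟨M, hM, hsum⟩ := V.exists_multiset_sum_character_pow_eq X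
  have : NeZero (Fintype.card G) := ⟨Fintype.card_ne_zero⟩
  have hsum₁ : ∑ x ∈ X, V.character x = M.sum := by simpa using hsum 1
  simp_rw [hsum, hsum₁]
  exact Multiset.sum_mem_range_ratCast_iff hM

end FDRep

theorem exists_coprime_zpow_eq_pow {G : Type*} [Group G] [Fintype G] {m : ℤ}
    (hm : Int.gcd m (Fintype.card G) = 1) :
    ∃ k : ℕ, k.Coprime (Fintype.card G) ∧ ∀ x : G, x ^ m = x ^ k := by
  have hmod : ((m % Fintype.card G).toNat : ℤ) = m % Fintype.card G :=
    Int.toNat_of_nonneg (Int.emod_nonneg _ (Nat.cast_ne_zero.2 Fintype.card_ne_zero))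
  refine ⟨(m % Fintype.card G).toNat, ?_, fun x => ?_⟩
  · rw [Nat.Coprime, ← Int.gcd_natCast_natCast, hmod, Int.gcd_emod, hm]
  · rw [← zpow_natCast, hmod, zpow_mod_card]

theorem pow_injective_of_coprime_card {G : Type*} [Group G] [Fintype G] {k : ℕ}
    (hk : k.Coprime (Fintype.card G)) : Function.Injective (fun x : G => x ^ k) :=
  (powCoprime (by rwa [Nat.card_eq_fintype_card, Nat.coprime_comm])).injective

theorem Finset.conj_mem_image_pow {G : Type*} [Group G] [DecidableEq G] {X : Finset G}
    (hX : ∀ g, ∀ x ∈ X, g * x * g⁻¹ ∈ X) (k : ℕ) (g : G) :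
    ∀ y ∈ X.image (· ^ k), g * y * g⁻¹ ∈ X.image (· ^ k) := by
  simp only [Finset.mem_image, forall_exists_index, and_imp, forall_apply_eq_imp_iff₂]
  exact fun x hx => ⟨g * x * g⁻¹, hX g x hx, conj_pow⟩

/-- **Theorem 3.3**. A central S-ring `𝒜` over a finite group `G` is rational if and
only if for every irreducible complex character `χ` of `G` and every basic set `X` of
`𝒜`, the character sum `∑_{x ∈ X} χ(x)` is rational. -/
theorem isRational_iff_character_sums_rational {G : Type} [Group G] [Fintype G] [DecidableEq G]
    (A : SRing G) (hA : A.IsCentral) :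
    A.IsRational ↔ ∀ V : FDRep ℂ G, CategoryTheory.Simple V → ∀ X ∈ A.S,
      (∑ x ∈ X, V.character x) ∈ Set.range ((↑) : ℚ → ℂ) := by
  constructor
  · intro hR V _ X hX
    refine (V.sum_character_mem_range_ratCast_iff X).2 fun m hm => ?_
    have himg := hR X hX m (by rwa [Int.gcd_natCast_natCast])
    simp only [zpow_natCast] at himg
    rw [← Finset.sum_image fun x _ y _ hxy => pow_injective_of_coprime_card hm hxy, himg]
  · intro h X hX m hm
    obtain ⟨k, hk, hpow⟩ := exists_coprime_zpow_eq_pow hm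
    have hconj (g : G) : ∀ x ∈ X, g * x * g⁻¹ ∈ X := fun x => hA.conj_mem hX g
    simp only [hpow]
    refine Finset.eq_of_forall_sum_character_eq (k := ℂ) (Finset.conj_mem_image_pow hconj k) hconj
      fun V hV => ?_
    rw [Finset.sum_image fun x _ y _ hxy => pow_injective_of_coprime_card hk hxy]
    exact (V.sum_character_mem_range_ratCast_iff X).1 (h V hV X hX) k hk
end
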